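/- If x and y are two distinct solutions of the variational monotone recurrence relation (with strong twist condition) on all of Z, and x_i ≥ y_i for all i in Z, then x_i > y_i strictly for all i in Z. -/

import Mathlib

open Finset Filter Topology

noncomputable def d1 (f : ℝ → ℝ → ℝ) (ν μ : ℝ) : ℝ := deriv (fun t => f t μ) ν
noncomputable def d2 (f : ℝ → ℝ → ℝ) (ν μ : ℝ) : ℝ := deriv (fun t => f ν t) μ
noncomputable def d11 (f : ℝ → ℝ → ℝ) (ν μ : ℝ) : ℝ := deriv (fun t => d1 f t μ) ν
noncomputable def d12 (f : ℝ → ℝ → ℝ) (ν μ : ℝ) : ℝ := deriv (fun t => d2 f t μ) ν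
noncomputable def d22 (f : ℝ → ℝ → ℝ) (ν μ : ℝ) : ℝ := deriv (fun t => d2 f ν t) μ

/-- The local energy at site `i` of the sequence `z`:  `S_i(z) = ∑_{j=1}^r f_j(z_i, z_{i+j})`. -/
noncomputable def siteE (r : ℕ) (f : ℕ → ℝ → ℝ → ℝ) (z : ℤ → ℝ) (i : ℤ) : ℝ :=
  ∑ j ∈ Finset.Icc 1 r, f j (z i) (z (i + j))

/-- `W_B` for the segment `B = [a,b] ⊂ ℤ`. -/
noncomputable def Wseg (r : ℕ) (f : ℕ → ℝ → ℝ → ℝ) (a b : ℤ) (z : ℤ → ℝ) : ℝ :=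
  ∑ i ∈ Finset.Icc a b, siteE r f z i

/-- A global minimizer: for every segment with interior `[a,b]` and every variation `v`
supported in `[a,b]`, the energy does not decrease. -/
def IsGlobalMin (r : ℕ) (f : ℕ → ℝ → ℝ → ℝ) (x : ℤ → ℝ) : Prop :=
  ∀ a b : ℤ, ∀ v : ℤ → ℝ, (∀ i, v i ≠ 0 → i ∈ Finset.Icc a b) →
    Wseg r f (a - r) b x ≤ Wseg r f (a - r) b (x + v)

/-- The variational monotone recurrence relation `∑_{j=i-r}^{i} ∂_i S_j(x) = 0` at site `i`. -/
def SolvesEL (r : ℕ) (f : ℕ → ℝ → ℝ → ℝ) (x : ℤ → ℝ) (i : ℤ) : Prop :=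
  (∑ j ∈ Finset.Icc 1 r, (d1 (f j) (x i) (x (i + j)) + d2 (f j) (x (i - j)) (x i))) = 0

/-- A local energy of range `r` in the sense of Definition 1.5 of the paper. -/
structure LocalEnergy (r : ℕ) (K lam : ℝ) where
  f : ℕ → ℝ → ℝ → ℝ
  smooth : ∀ j, ContDiff ℝ 2 (fun p : ℝ × ℝ => f j p.1 p.2)
  periodic : ∀ j ν μ, f j (ν + 1) (μ + 1) = f j ν μ
  bound11 : ∀ j ν μ, |d11 (f j) ν μ| ≤ K / r
  bound12 : ∀ j ν μ, |d12 (f j) ν μ| ≤ K / r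
  bound22 : ∀ j ν μ, |d22 (f j) ν μ| ≤ K / r
  coercive : ∀ j ∈ Finset.Icc 1 r, ∀ C : ℝ, ∃ R : ℝ, ∀ ν μ : ℝ, R ≤ |ν - μ| → C ≤ f j ν μ
  twist : ∀ j ∈ Finset.Icc 1 r, ∀ ν μ : ℝ, d12 (f j) ν μ ≤ -lam

/-- `x` and `y` are weakly ordered on the set `s`. -/
def WOrd (x y : ℤ → ℝ) (s : Set ℤ) : Prop :=
  (∀ i ∈ s, x i ≤ y i) ∨ (∀ i ∈ s, y i ≤ x i)

/-- `D` is an interval outside of which (on both components of the complement)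
`x` and `y` are weakly ordered. -/
def CrossProp (x y : ℤ → ℝ) (D : Set ℤ) : Prop :=
  D.OrdConnected ∧ WOrd x y {i | ∀ j ∈ D, i < j} ∧ WOrd x y {i | ∀ j ∈ D, j < i}

/-- The domain of crossing of `x` and `y`: the minimal interval `D` such that `x` and `y`
are weakly ordered on the connected components of its complement. -/
def IsCrossingDomain (x y : ℤ → ℝ) (D : Set ℤ) : Prop :=
  CrossProp x y D ∧ ∀ D' : Set ℤ, CrossProp x y D' → D ⊆ D'

/-- The translation `(τ_{k,l} x)_i = x_{i-k} + l`. -/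
def transl (k l : ℤ) (x : ℤ → ℝ) : ℤ → ℝ := fun i => x (i - k) + l

/-- The Birkhoff property. -/
def Birkhoff (x : ℤ → ℝ) : Prop :=
  ∀ k l : ℤ, (∀ i, transl k l x i ≤ x i) ∨ (∀ i, x i ≤ transl k l x i)

/-
The strong twist condition makes `∂₁f_j(ν, ·)` and `∂₂f_j(·, μ)` strictly decreasing (for `∂₁f_j`
via the symmetry of mixed partials). At a site `i` where `y ≤ x` touch, each term of the recurrence
relation for `x` is therefore at most the corresponding term for `y`; as both sums vanish, all terms
agree, and strict monotonicity forces `x_{i±1} = y_{i±1}`. So touching spreads to all of `ℤ`.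
-/

section MixedPartials

variable {g : ℝ → ℝ → ℝ}

theorem d1_eq_fderiv (hg : Differentiable ℝ (Function.uncurry g)) (ν μ : ℝ) :
    d1 g ν μ = fderiv ℝ (Function.uncurry g) (ν, μ) (1, 0) :=
  HasDerivAt.deriv (f := fun t => g t μ) <| (hg (ν, μ)).hasFDerivAt.comp_hasDerivAt
    (l := Function.uncurry g) ν ((hasDerivAt_id' ν).prodMk (hasDerivAt_const ν μ))

theorem d2_eq_fderiv (hg : Differentiable ℝ (Function.uncurry g)) (ν μ : ℝ) :
    d2 g ν μ = fderiv ℝ (Function.uncurry g) (ν, μ) (0, 1) :=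
  HasDerivAt.deriv (f := fun t => g ν t) <| (hg (ν, μ)).hasFDerivAt.comp_hasDerivAt
    (l := Function.uncurry g) μ ((hasDerivAt_const μ ν).prodMk (hasDerivAt_id' μ))

theorem hasDerivAt_fderiv_apply_comp {E : Type*} [NormedAddCommGroup E] [NormedSpace ℝ E]
    {G : E → ℝ} (hG : Differentiable ℝ (fderiv ℝ G)) {c : ℝ → E} {c' : E} {t : ℝ}
    (hc : HasDerivAt c c' t) (w : E) :
    HasDerivAt (fun s => fderiv ℝ G (c s) w) (fderiv ℝ (fderiv ℝ G) (c t) c' w) t := by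
  simpa using ((hG (c t)).hasFDerivAt.comp_hasDerivAt t hc).clm_apply (hasDerivAt_const t w)

theorem deriv_d1_right (hg : ContDiff ℝ 2 (Function.uncurry g)) (ν μ : ℝ) :
    deriv (d1 g ν) μ = d12 g ν μ := by
  have hg1 : Differentiable ℝ (Function.uncurry g) := hg.differentiable (by norm_num)
  have hg2 : Differentiable ℝ (fderiv ℝ (Function.uncurry g)) :=
    (hg.fderiv_right (m := 1) (by norm_num)).differentiable one_ne_zero
  have h1 : HasDerivAt (d1 g ν)
      (fderiv ℝ (fderiv ℝ (Function.uncurry g)) (ν, μ) (0, 1) (1, 0)) μ := by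
    simpa only [← d1_eq_fderiv hg1] using
      hasDerivAt_fderiv_apply_comp hg2 ((hasDerivAt_const μ ν).prodMk (hasDerivAt_id' μ)) (1, 0)
  have h2 : HasDerivAt (fun t => d2 g t μ)
      (fderiv ℝ (fderiv ℝ (Function.uncurry g)) (ν, μ) (1, 0) (0, 1)) ν := by
    simpa only [← d2_eq_fderiv hg1] using
      hasDerivAt_fderiv_apply_comp hg2 ((hasDerivAt_id' ν).prodMk (hasDerivAt_const ν μ)) (0, 1)
  rw [h1.deriv, d12, h2.deriv]
  exact hg.contDiffAt.isSymmSndFDerivAt (by simp) _ _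

theorem strictAnti_d1_right (hg : ContDiff ℝ 2 (Function.uncurry g))
    (htwist : ∀ ν μ, d12 g ν μ < 0) (ν : ℝ) : StrictAnti (d1 g ν) :=
  strictAnti_of_deriv_neg fun μ => deriv_d1_right hg ν μ ▸ htwist ν μ

theorem strictAnti_d2_left (htwist : ∀ ν μ, d12 g ν μ < 0) (μ : ℝ) :
    StrictAnti (fun t => d2 g t μ) :=
  strictAnti_of_deriv_neg fun ν => htwist ν μ

end MixedPartials

theorem SolvesEL.eq_of_le_of_eq {r : ℕ} {f : ℕ → ℝ → ℝ → ℝ}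
    (hsmooth : ∀ j ∈ Icc 1 r, ContDiff ℝ 2 (Function.uncurry (f j)))
    (htwist : ∀ j ∈ Icc 1 r, ∀ ν μ, d12 (f j) ν μ < 0)
    {x y : ℤ → ℝ} {i : ℤ} (hx : SolvesEL r f x i) (hy : SolvesEL r f y i)
    (hord : ∀ k, y k ≤ x k) (hi : x i = y i) :
    ∀ j ∈ Icc 1 r, x (i + j) = y (i + j) ∧ x (i - j) = y (i - j) := by
  have hd1 j (hj : j ∈ Icc 1 r) := strictAnti_d1_right (hsmooth j hj) (htwist j hj) (x i)
  have hd2 j (hj : j ∈ Icc 1 r) := strictAnti_d2_left (htwist j hj) (x i)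
  have hle1 j (hj : j ∈ Icc 1 r) := (hd1 j hj).antitone (hord (i + j))
  have hle2 j (hj : j ∈ Icc 1 r) := (hd2 j hj).antitone (hord (i - j))
  have hterms := (sum_eq_sum_iff_of_le fun j hj => add_le_add (hle1 j hj) (hle2 j hj)).mp
    (by rw [hx, hi, hy])
  intro j hj
  obtain ⟨h1, h2⟩ := (add_eq_add_iff_eq_and_eq (hle1 j hj) (hle2 j hj)).mp (hterms j hj)
  exact ⟨(hd1 j hj).injective h1, (hd2 j hj).injective h2⟩

/-- If `x ≠ y` are solutions of the variational monotone recurrence relation on all of `ℤ`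
and `x ≥ y`, then `x ≫ y`: `x_i > y_i` for every `i`. -/
theorem stmt5 (r : ℕ) (hr : 1 ≤ r) (lam : ℝ) (hlam : 0 < lam)
    (f : ℕ → ℝ → ℝ → ℝ)
    (hsmooth : ∀ j, ContDiff ℝ 2 (fun p : ℝ × ℝ => f j p.1 p.2))
    (htwist : ∀ j ∈ Finset.Icc 1 r, ∀ ν μ : ℝ, d12 (f j) ν μ ≤ -lam)
    (x y : ℤ → ℝ)
    (hELx : ∀ i : ℤ, SolvesEL r f x i) (hELy : ∀ i : ℤ, SolvesEL r f y i)
    (hne : x ≠ y) (hord : ∀ i : ℤ, y i ≤ x i) :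
    ∀ i : ℤ, y i < x i := by
  have hneg : ∀ j ∈ Icc 1 r, ∀ ν μ, d12 (f j) ν μ < 0 := fun j hj ν μ =>
    (htwist j hj ν μ).trans_lt (neg_neg_of_pos hlam)
  have hneighbours : ∀ k, x k = y k → x (k + 1) = y (k + 1) ∧ x (k - 1) = y (k - 1) :=
    fun k hk => by
      simpa using (hELx k).eq_of_le_of_eq (fun j _ => hsmooth j) hneg (hELy k) hord hk 1
        (mem_Icc.mpr ⟨le_rfl, hr⟩)
  intro i
  refine (hord i).lt_of_ne fun hi => hne (funext fun k => ?_)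
  induction k using Int.inductionOn' (b := i) with
  | zero => exact hi.symm
  | succ k _ hk => exact (hneighbours k hk).1
  | pred k _ hk => exact (hneighbours k hk).2
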